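/- arXiv:1704.01950 — 4 statements merged into one kernel-verified Lean document; each statement's English description precedes it below -/
import Mathlib

section
/- If f is a continuous, strictly decreasing function on [1,∞) that is regularly varying at infinity with index −γ for some γ > 0, then f is invertible on its range and the function y ↦ f⁻¹(1/y) is regularly varying at infinity with index 1/γ. -/
/-!
Put `φ y = f⁻¹ (1 / y)`. Then `f (φ (λ y)) = λ⁻¹ f (φ y)`, while `f (b x) / f x → b ^ (-γ)`.
For `b < λ ^ (1/γ)` we have `b ^ (-γ) > λ⁻¹`, so eventually `f (b φ y) > f (φ (λ y))` and, `f` being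
strictly decreasing, `b φ y < φ (λ y)`; symmetrically for `b > λ ^ (1/γ)`. This squeezes
`φ (λ y) / φ y` to `λ ^ (1/γ)`. The inverse is defined near `0⁺` because `f` is continuous and,
having negative index, takes arbitrarily small values.
-/

open Filter

/-- A positive function `f` is regularly varying at infinity with index `ρ` if
`f (λx)/f x → λ^ρ` as `x → ∞`, for every `λ > 0`. -/
def RegularlyVarying (f : ℝ → ℝ) (ρ : ℝ) : Prop :=
  ∀ lam : ℝ, 0 < lam → Tendsto (fun x => f (lam * x) / f x) atTop (nhds (lam ^ ρ))

open Set

namespace RegularlyVarying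

variable {f : ℝ → ℝ} {ρ : ℝ}

theorem eventually_mul_lt (hrv : RegularlyVarying f ρ) (hpos : ∀ᶠ x in atTop, 0 < f x)
    {a c : ℝ} (ha : 0 < a) (hc : c < a ^ ρ) : ∀ᶠ x in atTop, c * f x < f (a * x) := by
  filter_upwards [hpos, (hrv a ha).eventually_const_lt hc] with x hx hlt
  rwa [lt_div_iff₀ hx] at hlt

theorem eventually_lt_mul (hrv : RegularlyVarying f ρ) (hpos : ∀ᶠ x in atTop, 0 < f x)
    {a c : ℝ} (ha : 0 < a) (hc : a ^ ρ < c) : ∀ᶠ x in atTop, f (a * x) < c * f x := by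
  filter_upwards [hpos, (hrv a ha).eventually_lt_const hc] with x hx hlt
  rwa [div_lt_iff₀ hx] at hlt

/-- Along `2 ^ n * X` the function decays at least like `c ^ n` for some `c < 1`. -/
theorem frequently_lt (hrv : RegularlyVarying f ρ) (hρ : ρ < 0) (hpos : ∀ᶠ x in atTop, 0 < f x)
    {t : ℝ} (ht : 0 < t) : ∃ᶠ x in atTop, f x < t := by
  obtain ⟨c, hc2, hc1⟩ := exists_between (Real.rpow_lt_one_of_one_lt_of_neg one_lt_two hρ)
  have hc0 : 0 < c := (Real.rpow_pos_of_pos two_pos ρ).trans hc2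
  obtain ⟨X₀, hX₀⟩ := eventually_atTop.1 ((hrv.eventually_lt_mul hpos two_pos hc2).and hpos)
  refine frequently_atTop.2 fun x₀ => ?_
  set X := max (max x₀ X₀) 1
  have hX : x₀ ≤ X ∧ X₀ ≤ X ∧ 1 ≤ X := ⟨by simp [X], by simp [X], le_max_right _ _⟩
  have hge : ∀ n : ℕ, X ≤ 2 ^ n * X := fun n =>
    le_mul_of_one_le_left (by linarith) (one_le_pow₀ one_le_two)
  have hdecay : ∀ n : ℕ, f (2 ^ n * X) ≤ c ^ n * f X := by
    intro n
    induction n with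
    | zero => simp
    | succ n ih =>
      calc f (2 ^ (n + 1) * X) = f (2 * (2 ^ n * X)) := by ring_nf
        _ ≤ c * f (2 ^ n * X) := (hX₀ _ (hX.2.1.trans (hge n))).1.le
        _ ≤ c * (c ^ n * f X) := mul_le_mul_of_nonneg_left ih hc0.le
        _ = c ^ (n + 1) * f X := by ring
  have hlim : Tendsto (fun n : ℕ => c ^ n * f X) atTop (nhds 0) := by
    simpa using (tendsto_pow_atTop_nhds_zero_of_lt_one hc0.le hc1).mul_const (f X)
  obtain ⟨n, hn⟩ := (hlim.eventually_lt_const ht).exists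
  exact ⟨2 ^ n * X, hX.1.trans (hge n), (hdecay n).trans_lt hn⟩

end RegularlyVarying

theorem Ioc_subset_image_Ici_of_frequently_lt {f : ℝ → ℝ} {a : ℝ} (hcont : ContinuousOn f (Ici a))
    (hsmall : ∀ t > 0, ∃ᶠ x in atTop, f x < t) : Ioc 0 (f a) ⊆ f '' Ici a := by
  rintro t ⟨ht, hta⟩
  obtain ⟨X, hXt, haX⟩ := ((hsmall t ht).and_eventually (eventually_ge_atTop a)).exists
  obtain ⟨x, hx, rfl⟩ :=
    intermediate_value_Icc' haX (hcont.mono Icc_subset_Ici_self) ⟨hXt.le, hta⟩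
  exact ⟨x, hx.1, rfl⟩

theorem tendsto_atTop_of_tendsto_comp_zero {α : Type*} {l : Filter α} {f : ℝ → ℝ} {φ : α → ℝ}
    {a : ℝ} (hanti : AntitoneOn f (Ici a)) (hpos : ∀ x ∈ Ici a, 0 < f x)
    (hφa : ∀ᶠ y in l, a ≤ φ y) (hfφ : Tendsto (f ∘ φ) l (nhds 0)) : Tendsto φ l atTop := by
  refine tendsto_atTop.2 fun M => ?_
  have hM : a ≤ max M a := le_max_right M a
  filter_upwards [hφa, hfφ.eventually_lt_const (hpos _ hM)] with y hy hlt
  by_contra! hyM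
  exact (hanti hy hM (hyM.trans_le (le_max_left M a)).le).not_gt hlt

theorem RegularlyVarying.of_comp_eq_inv {f φ : ℝ → ℝ} {γ a : ℝ} (hγ : 0 < γ)
    (hanti : StrictAntiOn f (Ici a)) (hpos : ∀ᶠ x in atTop, 0 < f x)
    (hrv : RegularlyVarying f (-γ)) (hφ : Tendsto φ atTop atTop)
    (hfφ : ∀ᶠ y in atTop, f (φ y) = y⁻¹) : RegularlyVarying φ (1 / γ) := by
  intro lam hlam
  have hlam_mul : Tendsto (fun y => lam * y) atTop atTop := tendsto_id.const_mul_atTop hlam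
  have hμ : (lam⁻¹) ^ (-γ)⁻¹ = lam ^ (1 / γ) := by
    rw [Real.inv_rpow hlam.le, ← Real.rpow_neg hlam.le, inv_neg, neg_neg, one_div]
  have hshift : ∀ᶠ y in atTop, f (φ (lam * y)) = lam⁻¹ * f (φ y) := by
    filter_upwards [hfφ, hlam_mul.eventually hfφ] with y hy hly
    rw [hly, hy, mul_inv]
  have hφ_mul_ge : ∀ b > 0, ∀ᶠ y in atTop, a ≤ b * φ y := fun b hb =>
    hφ.eventually ((tendsto_id.const_mul_atTop hb).eventually_ge_atTop a)
  have hφ_shift_ge : ∀ᶠ y in atTop, a ≤ φ (lam * y) :=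
    hlam_mul.eventually (hφ.eventually_ge_atTop a)
  rw [tendsto_order]
  constructor
  · intro c hc
    obtain ⟨b, hcb, hbμ⟩ := exists_between (max_lt hc (by positivity : 0 < lam ^ (1 / γ)))
    obtain ⟨hcb, hb⟩ := max_lt_iff.1 hcb
    rw [← hμ, Real.lt_rpow_inv_iff_of_neg hb (inv_pos.2 hlam) (neg_lt_zero.2 hγ)] at hbμ
    filter_upwards [hφ.eventually (hrv.eventually_mul_lt hpos hb hbμ), hshift, hφ_mul_ge b hb,
      hφ_shift_ge, hφ.eventually_gt_atTop 0] with y hlt heq hge hge' hy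
    have hbφ : b * φ y < φ (lam * y) := (hanti.lt_iff_gt hge' hge).1 (heq ▸ hlt)
    rw [lt_div_iff₀ hy]
    exact (mul_lt_mul_of_pos_right hcb hy).trans hbφ
  · intro c hc
    obtain ⟨b, hμb, hbc⟩ := exists_between hc
    have hb : 0 < b := (by positivity : 0 < lam ^ (1 / γ)).trans hμb
    rw [← hμ, Real.rpow_inv_lt_iff_of_neg (inv_pos.2 hlam) hb (neg_lt_zero.2 hγ)] at hμb
    filter_upwards [hφ.eventually (hrv.eventually_lt_mul hpos hb hμb), hshift, hφ_mul_ge b hb,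
      hφ_shift_ge, hφ.eventually_gt_atTop 0] with y hlt heq hge hge' hy
    have hbφ : φ (lam * y) < b * φ y := (hanti.lt_iff_gt hge hge').1 (heq ▸ hlt)
    rw [div_lt_iff₀ hy]
    exact hbφ.trans (mul_lt_mul_of_pos_right hbc hy)

theorem stmt0 (f : ℝ → ℝ) (γ : ℝ) (hγ : 0 < γ)
    (hcont : ContinuousOn f (Set.Ici 1))
    (hanti : StrictAntiOn f (Set.Ici 1))
    (hpos : ∀ x ∈ Set.Ici (1:ℝ), 0 < f x)
    (hrv : RegularlyVarying f (-γ)) :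
    ∃ g : ℝ → ℝ, (∀ x ∈ Set.Ici (1:ℝ), g (f x) = x) ∧
      RegularlyVarying (fun y => g (1 / y)) (1 / γ) := by
  have hpos' : ∀ᶠ x in atTop, 0 < f x := (eventually_ge_atTop 1).mono hpos
  have hrange : Ioc 0 (f 1) ⊆ f '' Ici 1 := Ioc_subset_image_Ici_of_frequently_lt hcont
    fun _ ht => hrv.frequently_lt (neg_lt_zero.2 hγ) hpos' ht
  set g := Function.invFunOn f (Ici 1)
  have hg : ∀ᶠ y in atTop, 1 ≤ g (1 / y) ∧ f (g (1 / y)) = y⁻¹ := by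
    filter_upwards [eventually_gt_atTop 0,
      tendsto_inv_atTop_zero.eventually_lt_const (hpos 1 self_mem_Ici)] with y hy hyf
    have hy_mem : ∃ x ∈ Ici 1, f x = 1 / y :=
      hrange ⟨by positivity, by rw [one_div]; exact hyf.le⟩
    exact ⟨Function.invFunOn_mem hy_mem, by rw [Function.invFunOn_eq hy_mem, one_div]⟩
  have hφ : Tendsto (fun y => g (1 / y)) atTop atTop :=
    tendsto_atTop_of_tendsto_comp_zero hanti.antitoneOn hpos (hg.mono fun _ hy => hy.1)
      (tendsto_inv_atTop_zero.congr' (hg.mono fun _ hy => hy.2.symm))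
  exact ⟨g, fun x hx => hanti.injOn.leftInvOn_invFunOn hx,
    hrv.of_comp_eq_inv hγ hanti hpos' hφ (hg.mono fun _ hy => hy.2)⟩
end

section
/- Let F be a power series with nonnegative coefficients and radius of convergence r > 0 with F(r) < ∞, and let F̂ be a power series with nonnegative coefficients such that F(x) = F̂(x·F(x)²) for all 0 ≤ x ≤ r. Then the radius of convergence of F̂ is at least r·F(r)², and for 0 < y ≤ r·F(r)², F̂(y) = sqrt(y / P⁻¹(y)), where P(x) := x·F(x)² and P⁻¹ is the inverse of P on [0,r]. -/
theorem stmt3 (f g : ℕ → ℝ) (r : ℝ) (hr : 0 < r)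
    (hf : ∀ k, 0 ≤ f k) (hg : ∀ k, 0 ≤ g k)
    (F Fh : ℝ → ℝ)
    (hF : ∀ x, F x = ∑' k, f k * x ^ k)
    (hFh : ∀ y, Fh y = ∑' k, g k * y ^ k)
    (hFr : Summable fun k => f k * r ^ k)
    (hrel : ∀ x ∈ Set.Icc 0 r, Summable (fun k => g k * (x * F x ^ 2) ^ k) ∧
      F x = Fh (x * F x ^ 2))
    (P : ℝ → ℝ) (hP : ∀ x, P x = x * F x ^ 2)
    (hPmono : StrictMonoOn P (Set.Icc 0 r))
    (Pinv : ℝ → ℝ)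
    (hPinv1 : ∀ x ∈ Set.Icc 0 r, Pinv (P x) = x)
    (hPinv2 : ∀ y ∈ Set.Icc 0 (r * F r ^ 2), P (Pinv y) = y ∧ Pinv y ∈ Set.Icc 0 r) :
    (∀ y, 0 ≤ y → y < r * F r ^ 2 → Summable fun k => g k * y ^ k) ∧
      ∀ y, 0 < y → y ≤ r * F r ^ 2 → Fh y = Real.sqrt (y / Pinv y) := by
  have hrmem : r ∈ Set.Icc (0:ℝ) r := ⟨le_of_lt hr, le_refl r⟩
  have hsumr : Summable (fun k => g k * (r * F r ^ 2) ^ k) := (hrel r hrmem).1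
  have hFnonneg : ∀ x ∈ Set.Icc (0:ℝ) r, 0 ≤ F x := by
    intro x hx
    rw [hF]
    exact tsum_nonneg fun k => mul_nonneg (hf k) (pow_nonneg hx.1 k)
  constructor
  · intro y hy0 hylt
    apply Summable.of_nonneg_of_le
      (fun k => mul_nonneg (hg k) (pow_nonneg hy0 k))
      (fun k => ?_) hsumr
    exact mul_le_mul_of_nonneg_left
      (pow_le_pow_left₀ hy0 (le_of_lt hylt) k) (hg k)
  · intro y hy0 hyle
    have hymem : y ∈ Set.Icc 0 (r * F r ^ 2) := ⟨le_of_lt hy0, hyle⟩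
    obtain ⟨hPy, hxmem⟩ := hPinv2 y hymem
    set x := Pinv y with hx
    have hxpos : 0 < x := by
      rcases lt_or_eq_of_le hxmem.1 with h | h
      · exact h
      · exfalso
        have : P x = 0 := by rw [← h, hP]; ring
        rw [hPy] at this
        exact absurd this (ne_of_gt hy0)
    have hyx : y = x * F x ^ 2 := by rw [← hPy, hP]
    have hFx : F x = Fh y := by
      rw [hyx]; exact (hrel x hxmem).2
    have : y / x = F x ^ 2 := by
      rw [hyx]; field_simp
    rw [this, ← hFx, Real.sqrt_sq (hFnonneg x hxmem)]
end

section
/- Define ν(2k) := (1/F(ρ))·(ρF(ρ)²)^k·F̂_k for k ≥ 0 and ν(odd) = 0, where F̂ is the power series with coefficients F̂_k and F(x) = F̂(xF(x)²). Then the generating function of ν is G_ν(s) = F̂(ρF(ρ)²s²)/F(ρ) for s ∈ [0,1], and if F is differentiable at ρ with F'(ρ) < ∞, the mean of ν equals m_ν = 1/(1 + F(ρ)/(2ρF'(ρ))). In particular m_ν < 1 if F'(ρ) < ∞ and m_ν = 1 if and only if F'(ρ) = ∞ (interpreting the formula as a limit). -/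
/-!
On `[0, ρ]` we have `F = F̂ ∘ P` with `P x = x F(x)²` increasing to `y = ρ F(ρ)²`, so along
`P x` (`x → ρ⁻`) the difference quotients of `F̂` at `y` are `slope F ρ x / slope P ρ x`, which
tend to `F'(ρ) / P'(ρ)`. For a power series with nonnegative coefficients the left difference
quotient at `y` is itself a series whose terms increase to `k F̂_k y^(k-1)`, so by monotone
convergence its limit is `∑ k F̂_k y^(k-1) = F̂'(y)`. Since `ν` is `F̂(y s²) / F(ρ)` read off at even
indices, its mean is `2 y F̂'(y) / F(ρ) = 2ρF(ρ)F'(ρ) / (F(ρ)² + 2ρF(ρ)F'(ρ))`.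
-/

open Filter Topology

section EvenlySupported

variable {α : Type*} [AddCommMonoid α] [TopologicalSpace α] {a : ℕ → α}

lemma hasSum_comp_two_mul_iff (ha : ∀ n, Odd n → a n = 0) {s : α} :
    HasSum (fun k => a (2 * k)) s ↔ HasSum a s :=
  (mul_right_injective₀ two_ne_zero).hasSum_iff fun n hn =>
    ha n (Nat.not_even_iff_odd.mp (by simpa using hn))

lemma tsum_comp_two_mul (ha : ∀ n, Odd n → a n = 0) : ∑' k, a (2 * k) = ∑' n, a n :=
  (mul_right_injective₀ two_ne_zero).tsum_eq fun n hn => by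
    by_contra h
    exact hn (ha n (Nat.not_even_iff_odd.mp (by simpa using h)))

end EvenlySupported

section NonnegCoeffs

variable {a : ℕ → ℝ}

lemma summable_mul_pow_of_le (ha : ∀ k, 0 ≤ a k) {x y : ℝ} (hy : Summable fun k => a k * y ^ k)
    (hx : 0 ≤ x) (hxy : x ≤ y) : Summable fun k => a k * x ^ k :=
  hy.of_nonneg_of_le (fun k => mul_nonneg (ha k) (pow_nonneg hx k))
    fun k => mul_le_mul_of_nonneg_left (pow_le_pow_left₀ hx hxy k) (ha k)

lemma monotoneOn_tsum_mul_pow (ha : ∀ k, 0 ≤ a k) {r : ℝ} (hr : Summable fun k => a k * r ^ k) :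
    MonotoneOn (fun x => ∑' k, a k * x ^ k) (Set.Icc 0 r) := fun _ hx _ hy hxy =>
  Summable.tsum_le_tsum (fun k => mul_le_mul_of_nonneg_left (pow_le_pow_left₀ hx.1 hxy k) (ha k))
    (summable_mul_pow_of_le ha hr hx.1 hx.2) (summable_mul_pow_of_le ha hr hy.1 hy.2)

lemma slope_const_mul_pow (c : ℝ) (k : ℕ) {y t : ℝ} (h : t ≠ y) :
    slope (fun x => c * x ^ k) y t = c * ∑ i ∈ Finset.range k, y ^ i * t ^ (k - 1 - i) := by
  rw [slope_def_field, div_eq_iff (sub_ne_zero.mpr h), mul_assoc, ← neg_sub y t, mul_neg,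
    geom_sum₂_mul]
  ring

lemma hasSum_slope_tsum_mul_pow (ha : ∀ k, 0 ≤ a k) {y t : ℝ}
    (hy : Summable fun k => a k * y ^ k) (ht : 0 ≤ t) (hty : t < y) :
    HasSum (fun k => a k * ∑ i ∈ Finset.range k, y ^ i * t ^ (k - 1 - i))
      (slope (fun x => ∑' k, a k * x ^ k) y t) := by
  have hterm (k : ℕ) : a k * ∑ i ∈ Finset.range k, y ^ i * t ^ (k - 1 - i) =
      (t - y)⁻¹ * (a k * t ^ k - a k * y ^ k) := by
    rw [← slope_const_mul_pow _ _ hty.ne, slope_def_module, smul_eq_mul]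
  simp_rw [hterm, slope_def_module, smul_eq_mul]
  exact ((summable_mul_pow_of_le ha hy ht hty.le).hasSum.sub hy.hasSum).mul_left _

lemma sum_pow_mul_pow_le {y t : ℝ} (ht : 0 ≤ t) (hty : t ≤ y) (k : ℕ) :
    ∑ i ∈ Finset.range k, y ^ i * t ^ (k - 1 - i) ≤ k * y ^ (k - 1) := by
  rw [← geom_sum₂_self]
  gcongr with i
  exact pow_nonneg (ht.trans hty) i

theorem hasSum_mul_pow_sub_one_of_tendsto_slope (ha : ∀ k, 0 ≤ a k) {y L : ℝ}
    (hy : Summable fun k => a k * y ^ k) {l : Filter ℝ} [l.NeBot] (hl : l ≤ 𝓝[Set.Ico 0 y] y)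
    (hL : Tendsto (slope (fun x => ∑' k, a k * x ^ k) y) l (𝓝 L)) :
    HasSum (fun k => k * a k * y ^ (k - 1)) L := by
  have hmem : ∀ᶠ t in l, t ∈ Set.Ico 0 y := hl self_mem_nhdsWithin
  have hy0 : 0 ≤ y := by
    obtain ⟨t, ht⟩ := hmem.exists
    exact ht.1.trans ht.2.le
  have hnonneg : ∀ k, 0 ≤ k * a k * y ^ (k - 1) := fun k => by have := ha k; positivity
  have hpartial : ∀ n, ∑ k ∈ Finset.range n, k * a k * y ^ (k - 1) ≤ L := by
    intro n
    have hcont : Continuous fun t =>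
        ∑ k ∈ Finset.range n, a k * ∑ i ∈ Finset.range k, y ^ i * t ^ (k - 1 - i) := by
      fun_prop
    have hlim : Tendsto (fun t =>
        ∑ k ∈ Finset.range n, a k * ∑ i ∈ Finset.range k, y ^ i * t ^ (k - 1 - i)) l
        (𝓝 (∑ k ∈ Finset.range n, k * a k * y ^ (k - 1))) := by
      convert (hcont.tendsto y).mono_left (hl.trans nhdsWithin_le_nhds) using 3 with k
      rw [geom_sum₂_self]
      ring
    refine le_of_tendsto_of_tendsto hlim hL ?_
    filter_upwards [hmem] with t ht
    exact sum_le_hasSum _ (fun k _ => mul_nonneg (ha k) (Finset.sum_nonneg fun i _ =>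
      mul_nonneg (pow_nonneg hy0 i) (pow_nonneg ht.1 _)))
      (hasSum_slope_tsum_mul_pow ha hy ht.1 ht.2)
  have hsummable := summable_of_sum_range_le hnonneg hpartial
  refine (le_antisymm (Real.tsum_le_of_sum_range_le hnonneg hpartial) ?_) ▸ hsummable.hasSum
  refine le_of_tendsto hL ?_
  filter_upwards [hmem] with t ht
  refine hasSum_le (fun k => ?_) (hasSum_slope_tsum_mul_pow ha hy ht.1 ht.2) hsummable.hasSum
  calc a k * ∑ i ∈ Finset.range k, y ^ i * t ^ (k - 1 - i) ≤ a k * (k * y ^ (k - 1)) :=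
        mul_le_mul_of_nonneg_left (sum_pow_mul_pow_le ht.1 ht.2.le k) (ha k)
    _ = k * a k * y ^ (k - 1) := by ring

end NonnegCoeffs

lemma tendsto_slope_of_eq_comp {G H P : ℝ → ℝ} {r G' P' : ℝ}
    (hG : HasDerivWithinAt G G' (Set.Iio r) r) (hP : HasDerivWithinAt P P' (Set.Iio r) r)
    (hP' : P' ≠ 0) (hGr : G r = H (P r)) (hGH : ∀ᶠ x in 𝓝[<] r, G x = H (P x))
    (hPne : ∀ᶠ x in 𝓝[<] r, P x ≠ P r) :
    Tendsto (slope H (P r)) (map P (𝓝[<] r)) (𝓝 (G' / P')) := by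
  rw [tendsto_map'_iff]
  have hslopeG := (hasDerivWithinAt_iff_tendsto_slope' Set.self_notMem_Iio).mp hG
  have hslopeP := (hasDerivWithinAt_iff_tendsto_slope' Set.self_notMem_Iio).mp hP
  refine (hslopeG.div hslopeP hP').congr' ?_
  filter_upwards [hGH, hPne, self_mem_nhdsWithin] with x hx hPx (hxr : x < r)
  simp only [Function.comp, Pi.div_apply, slope_def_field, hx, hGr]
  field_simp [sub_ne_zero.mpr hPx, sub_ne_zero.mpr hxr.ne]

theorem hasSum_mul_pow_sub_one_of_eq_comp {g : ℕ → ℝ} (hg : ∀ k, 0 ≤ g k) {F : ℝ → ℝ}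
    {r F' : ℝ} (hr : 0 < r) (hFr : 0 < F r) (hF_nonneg : ∀ x ∈ Set.Icc 0 r, 0 ≤ F x)
    (hF_mono : MonotoneOn F (Set.Icc 0 r))
    (hrel : ∀ x ∈ Set.Icc 0 r, F x = ∑' k, g k * (x * F x ^ 2) ^ k)
    (hF' : HasDerivWithinAt F F' (Set.Iio r) r) (hF'_nonneg : 0 ≤ F') :
    HasSum (fun k => k * g k * (r * F r ^ 2) ^ (k - 1))
      (F' / (F r ^ 2 + 2 * r * F r * F')) := by
  set P : ℝ → ℝ := fun x => x * F x ^ 2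
  have hr_mem : r ∈ Set.Icc 0 r := ⟨hr.le, le_rfl⟩
  have hg_summable : Summable fun k => g k * P r ^ k := by
    by_contra h
    exact hFr.ne' ((hrel r hr_mem).trans (tsum_eq_zero_of_not_summable h))
  have hP : HasDerivWithinAt P (F r ^ 2 + 2 * r * F r * F') (Set.Iio r) r :=
    ((hasDerivWithinAt_id r _).fun_mul (hF'.fun_pow 2)).congr_deriv (by simp only [id]; ring)
  have hP_lt : ∀ᶠ x in 𝓝[<] r, P x ∈ Set.Ico 0 (P r) := by
    filter_upwards [Ioo_mem_nhdsLT hr] with x hx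
    have hx_mem : x ∈ Set.Icc 0 r := ⟨hx.1.le, hx.2.le⟩
    have hFx : F x ≤ F r := hF_mono hx_mem hr_mem hx.2.le
    refine ⟨mul_nonneg hx.1.le (sq_nonneg _), ?_⟩
    calc x * F x ^ 2 ≤ x * F r ^ 2 := by
          have := hF_nonneg x hx_mem
          gcongr
          exact hx.1.le
      _ < r * F r ^ 2 := by gcongr; exact hx.2
  have hmap : map P (𝓝[<] r) ≤ 𝓝[Set.Ico 0 (P r)] (P r) :=
    tendsto_nhdsWithin_iff.mpr ⟨hP.continuousWithinAt.tendsto, hP_lt⟩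
  have hslope := tendsto_slope_of_eq_comp (H := fun y => ∑' k, g k * y ^ k) hF' hP
    (by positivity) (hrel r hr_mem)
    (mem_of_superset (Ioo_mem_nhdsLT hr) fun x hx => hrel x ⟨hx.1.le, hx.2.le⟩)
    (hP_lt.mono fun x hx => hx.2.ne)
  exact hasSum_mul_pow_sub_one_of_tendsto_slope hg hg_summable hmap hslope

section EvenDilation

variable {ν g : ℕ → ℝ} {c y : ℝ}

lemma tsum_mul_pow_eq_of_two_mul (hν_even : ∀ k, ν (2 * k) = c * y ^ k * g k)
    (hν_odd : ∀ n, Odd n → ν n = 0) (s : ℝ) :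
    ∑' n, ν n * s ^ n = c * ∑' k, g k * (y * s ^ 2) ^ k := by
  rw [← tsum_comp_two_mul fun n hn => by rw [hν_odd n hn, zero_mul], ← tsum_mul_left]
  congr 1 with k
  rw [hν_even, pow_mul, mul_pow]
  ring

lemma hasSum_nat_mul_of_two_mul (hν_even : ∀ k, ν (2 * k) = c * y ^ k * g k)
    (hν_odd : ∀ n, Odd n → ν n = 0) {D : ℝ} (hD : HasSum (fun k => k * g k * y ^ (k - 1)) D) :
    HasSum (fun n => n * ν n) (2 * c * y * D) := by
  rw [← hasSum_comp_two_mul_iff fun n hn => by rw [hν_odd n hn, mul_zero]]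
  have hterm : (fun k : ℕ => ((2 * k : ℕ) : ℝ) * ν (2 * k)) =
      fun k => 2 * c * y * (k * g k * y ^ (k - 1)) := by
    funext k
    rw [hν_even]
    rcases k with _ | k
    · simp
    · push_cast
      ring
  rw [hterm]
  exact hD.mul_left _

end EvenDilation

theorem stmt6 (f g : ℕ → ℝ) (r : ℝ) (hr : 0 < r)
    (hf : ∀ k, 0 ≤ f k) (hg : ∀ k, 0 ≤ g k)
    (F Fh : ℝ → ℝ)
    (hF : ∀ x, F x = ∑' k, f k * x ^ k)
    (hFh : ∀ y, Fh y = ∑' k, g k * y ^ k)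
    (hFrpos : 0 < F r)
    (hFr : Summable fun k => f k * r ^ k)
    (hrel : ∀ x ∈ Set.Icc 0 r, F x = Fh (x * F x ^ 2))
    (ν : ℕ → ℝ)
    (hν : ∀ n, ν n = if n % 2 = 0 then (1 / F r) * (r * F r ^ 2) ^ (n / 2) * g (n / 2) else 0)
    (Fr' : ℝ) (hFr' : HasDerivWithinAt F Fr' (Set.Iio r) r) (hFr'pos : 0 < Fr') :
    (∀ s ∈ Set.Icc (0:ℝ) 1, (∑' n, ν n * s ^ n) = Fh (r * F r ^ 2 * s ^ 2) / F r) ∧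
      HasSum (fun n : ℕ => (n : ℝ) * ν n) (1 / (1 + F r / (2 * r * Fr'))) ∧
      1 / (1 + F r / (2 * r * Fr')) < 1 := by
  have hF_eq : F = fun x => ∑' k, f k * x ^ k := funext hF
  have hν_even (k : ℕ) : ν (2 * k) = 1 / F r * (r * F r ^ 2) ^ k * g k := by simp [hν]
  have hν_odd (n : ℕ) (hn : Odd n) : ν n = 0 := by simp [hν, Nat.odd_iff.mp hn]
  have hderiv := hasSum_mul_pow_sub_one_of_eq_comp hg hr hFrpos
    (fun x hx => hF_eq ▸ tsum_nonneg fun k => mul_nonneg (hf k) (pow_nonneg hx.1 k))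
    (hF_eq ▸ monotoneOn_tsum_mul_pow hf hFr) (fun x hx => (hrel x hx).trans (hFh _)) hFr'
    hFr'pos.le
  have hmean : 2 * (1 / F r) * (r * F r ^ 2) * (Fr' / (F r ^ 2 + 2 * r * F r * Fr')) =
      1 / (1 + F r / (2 * r * Fr')) := by
    field_simp
    ring
  refine ⟨fun s _ => ?_, hmean ▸ hasSum_nat_mul_of_two_mul hν_even hν_odd hderiv, ?_⟩
  · rw [tsum_mul_pow_eq_of_two_mul hν_even hν_odd, hFh]
    ring
  · rw [div_lt_one (by positivity)]
    have := div_pos hFrpos (by positivity : 0 < 2 * r * Fr')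
    linarith
end

section
/- Let q* be the weight sequence q*_k = (1/4)·6^{1−k}·Γ(k−3/2)/Γ(k+5/2) for k ≥ 2 and q*_1 = 0. Then the partition function F_k = (3/4)·6^k / ((k+3/2)(k+1/2)) has generating function F(x) = ∑_{k≥0} F_k x^k = 1/(4x) − (3/(4(6x)^{3/2}))·(1−6x)·log((1+√(6x))/(1−√(6x))) for 0 < x < 1/6. -/
/-- The special weight sequence `q*`. -/
noncomputable def qstar (k : ℕ) : ℝ :=
  if 2 ≤ k then (1/4) * 6 ^ ((1:ℤ) - k) * Real.Gamma ((k : ℝ) - 3/2) / Real.Gamma ((k : ℝ) + 5/2)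
  else 0

theorem stmt9 (x : ℝ) (hx : 0 < x) (hx' : x < 1/6) :
    HasSum (fun k : ℕ => (3/4) * (6 * x) ^ k / (((k : ℝ) + 3/2) * ((k : ℝ) + 1/2)))
      (1 / (4 * x) - (3 / (4 * (6 * x) ^ ((3:ℝ)/2))) * (1 - 6 * x) *
        Real.log ((1 + Real.sqrt (6 * x)) / (1 - Real.sqrt (6 * x)))) := by
  set t := Real.sqrt (6 * x) with ht
  have hy0 : (0:ℝ) < 6 * x := by linarith
  have hy1 : 6 * x < 1 := by linarith
  have ht0 : 0 < t := Real.sqrt_pos.mpr hy0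
  have ht2 : t ^ 2 = 6 * x := Real.sq_sqrt hy0.le
  have ht1 : t < 1 := by
    nlinarith [ht2, ht0]
  have habs : |t| < 1 := by rw [abs_of_pos ht0]; exact ht1
  have hL := Real.hasSum_log_sub_log_of_abs_lt_one habs
  set L := Real.log (1 + t) - Real.log (1 - t) with hLdef
  set g : ℕ → ℝ := fun k => (2 : ℝ) * (1 / (2 * k + 1)) * t ^ (2 * k + 1) with hg
  -- sum of shifted sequence
  have hLshift : HasSum (fun k : ℕ => g (k + 1)) (L - 2 * t) := by
    have := (hasSum_nat_add_iff' (f := g) 1).mpr hL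
    simpa [g] using this
  have hmain : HasSum (fun k : ℕ => (3 / (4 * t)) * g k - (3 / (4 * t ^ 3)) * g (k + 1))
      ((3 / (4 * t)) * L - (3 / (4 * t ^ 3)) * (L - 2 * t)) :=
    (hL.mul_left _).sub (hLshift.mul_left _)
  have hteq : (fun k : ℕ => (3 / (4 * t)) * g k - (3 / (4 * t ^ 3)) * g (k + 1)) =
      fun k : ℕ => (3/4) * (6 * x) ^ k / (((k : ℝ) + 3/2) * ((k : ℝ) + 1/2)) := by
    funext k
    have hk1 : (2 * (k : ℝ) + 1) ≠ 0 := by positivity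
    have hk2 : (2 * ((k : ℝ) + 1) + 1) ≠ 0 := by positivity
    have hk3 : ((k : ℝ) + 3/2) ≠ 0 := by positivity
    have hk4 : ((k : ℝ) + 1/2) ≠ 0 := by positivity
    have hpow : (6 * x) ^ k = t ^ (2 * k) := by rw [← ht2, ← pow_mul]
    simp only [g, hpow]
    push_cast
    field_simp
    ring
  rw [hteq] at hmain
  convert hmain using 1
  have hrpow : (6 * x) ^ ((3:ℝ)/2) = t ^ 3 := by
    rw [ht, Real.sqrt_eq_rpow, ← Real.rpow_natCast ((6*x) ^ ((1:ℝ)/2)) 3,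
      ← Real.rpow_mul hy0.le]
    norm_num
  have hlog : Real.log ((1 + t) / (1 - t)) = L := by
    rw [hLdef, Real.log_div (by linarith) (by linarith)]
  rw [hrpow, hlog]
  have hx_eq : x = t ^ 2 / 6 := by linarith [ht2]
  rw [hx_eq]
  field_simp
  ring
end
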